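/- arXiv:2605.18965 — 2 statements merged into one kernel-verified Lean document; each statement's English description precedes it below -/
import Mathlib

section
/- Let a : ℝ → ℝ be twice continuously differentiable, positive, nonconstant, and periodic with some period P > 0, and let H(t) = a'(t)/a(t). Then the finite-interval flat ANEC integrals I(T₋,T₊) = ∫_{T₋}^{T₊} (−2H'(t))/a(t) dt tend to −∞ as T₋ → −∞ and T₊ → +∞. Moreover ∫_{0}^{T} a(t) dt → +∞ and ∫_{−T}^{0} a(t) dt → +∞ as T → +∞, so the corresponding flat FRW spacetime is radially null geodesically complete in both directions. -/
/-!
Since `a' = H a`, one has `(H / a)' = H' / a - H² / a`, hence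
`I(T₋, T₊) = -2 [H / a]_{T₋}^{T₊} - 2 ∫_{T₋}^{T₊} H² / a`.
For periodic `a` the boundary term is bounded, while `H² / a ≥ 0` is periodic and positive
somewhere (a nonconstant `a` has `a' ≠ 0` somewhere), so its integral over a period is positive
and its integral over `[T₋, T₊]` grows without bound. Null completeness is the same growth
argument applied to the positive periodic function `a`.
-/

open Filter MeasureTheory

namespace Function.Periodic

variable {f : ℝ → ℝ} {c : ℝ}

theorem deriv (hf : Periodic f c) : Periodic (_root_.deriv f) c := fun t => by
  rw [← deriv_comp_add_const, hf.funext]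

theorem intervalIntegral_pos_of_nonneg (hf : Periodic f c) (hc : 0 < c) (hcont : Continuous f)
    (hnonneg : ∀ t, 0 ≤ f t) {t₀ : ℝ} (ht₀ : 0 < f t₀) : 0 < ∫ t in 0..c, f t := by
  obtain ⟨s, hs, hfs⟩ := hf.exists_mem_Ico₀ hc t₀
  exact intervalIntegral.integral_pos hc hcont.continuousOn (fun t _ => hnonneg t)
    ⟨s, Set.Ico_subset_Icc_self hs, hfs ▸ ht₀⟩

theorem tendsto_intervalIntegral_atBot_prod_atTop (hf : Periodic f c) (hc : 0 < c)
    (h₀ : 0 < ∫ t in 0..c, f t) :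
    Tendsto (fun p : ℝ × ℝ => ∫ t in p.1..p.2, f t) (atBot ×ˢ atTop) atTop := by
  have hint := hf.intervalIntegrable₀ hc.ne'
    (intervalIntegral.intervalIntegrable_of_integral_ne_zero h₀.ne')
  have hsplit (p : ℝ × ℝ) :
      (∫ t in 0..p.2, f t) + -∫ t in 0..p.1, f t = ∫ t in p.1..p.2, f t := by
    rw [← sub_eq_add_neg, intervalIntegral.integral_interval_sub_left (hint 0 p.2) (hint 0 p.1)]
  have hupper : Tendsto (fun p : ℝ × ℝ => ∫ t in 0..p.2, f t) (atBot ×ˢ atTop) atTop :=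
    (hf.tendsto_atTop_intervalIntegral_of_pos h₀ hc).comp tendsto_snd
  have hlower : Tendsto (fun p : ℝ × ℝ => -∫ t in 0..p.1, f t) (atBot ×ˢ atTop) atTop :=
    tendsto_neg_atBot_atTop.comp
      ((hf.tendsto_atBot_intervalIntegral_of_pos h₀ hc).comp tendsto_fst)
  exact (hupper.atTop_add_atTop hlower).congr hsplit

theorem tendsto_intervalIntegral_neg_zero_atTop (hf : Periodic f c) (hc : 0 < c)
    (h₀ : 0 < ∫ t in 0..c, f t) :
    Tendsto (fun T => ∫ t in -T..0, f t) atTop atTop := by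
  refine Tendsto.congr (fun T => (intervalIntegral.integral_symm 0 (-T)).symm) ?_
  exact tendsto_neg_atBot_atTop.comp
    ((hf.tendsto_atBot_intervalIntegral_of_pos h₀ hc).comp tendsto_neg_atTop_atBot)

end Function.Periodic

section FlatFRW

variable {a H : ℝ → ℝ}

theorem hasDerivAt_div_of_hasDerivAt_eq_mul {t H' : ℝ} (hH : HasDerivAt H H' t)
    (ha : HasDerivAt a (H t * a t) t) (hat : a t ≠ 0) :
    HasDerivAt (fun s => H s / a s) (H' / a t - H t ^ 2 / a t) t := by
  refine (hH.div ha hat).congr_deriv ?_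
  field_simp

theorem integral_neg_two_mul_deriv_div_eq (hH : ContDiff ℝ 1 H)
    (ha : ∀ t, HasDerivAt a (H t * a t) t) (ha₀ : ∀ t, a t ≠ 0) (x y : ℝ) :
    ∫ t in x..y, -2 * deriv H t / a t =
      -2 * (H y / a y - H x / a x) - 2 * ∫ t in x..y, H t ^ 2 / a t := by
  have haC : Continuous a := continuous_iff_continuousAt.2 fun t => (ha t).continuousAt
  have hHdiff := hH.differentiable one_ne_zero
  have hderiv : ∀ t, HasDerivAt (fun s => H s / a s) (deriv H t / a t - H t ^ 2 / a t) t :=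
    fun t => hasDerivAt_div_of_hasDerivAt_eq_mul (hHdiff t).hasDerivAt (ha t) (ha₀ t)
  have hg : Continuous fun t => H t ^ 2 / a t := (hH.continuous.pow 2).div haC ha₀
  have hderivC : Continuous fun t => deriv H t / a t - H t ^ 2 / a t :=
    ((hH.continuous_deriv le_rfl).div haC ha₀).sub hg
  rw [← intervalIntegral.integral_eq_sub_of_hasDerivAt (fun t _ => hderiv t)
      (hderivC.intervalIntegrable x y),
    ← intervalIntegral.integral_const_mul, ← intervalIntegral.integral_const_mul,
    ← intervalIntegral.integral_sub ((hderivC.intervalIntegrable x y).const_mul _)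
      ((hg.intervalIntegrable x y).const_mul _)]
  congr 1 with t
  ring

theorem tendsto_integral_neg_two_mul_deriv_div_atBot {P : ℝ} (hP : 0 < P)
    (hH : ContDiff ℝ 1 H) (ha : ∀ t, HasDerivAt a (H t * a t) t) (hpos : ∀ t, 0 < a t)
    (haper : Function.Periodic a P) (hHper : Function.Periodic H P) {t₀ : ℝ}
    (ht₀ : H t₀ ≠ 0) :
    Tendsto (fun p : ℝ × ℝ => ∫ t in p.1..p.2, -2 * deriv H t / a t) (atBot ×ˢ atTop)
      atBot := by
  have ha₀ t : a t ≠ 0 := (hpos t).ne'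
  have haC : Continuous a := continuous_iff_continuousAt.2 fun t => (ha t).continuousAt
  obtain ⟨C, hC⟩ := isBounded_iff_forall_norm_le.1
    ((hHper.div haper).isBounded_of_continuous hP.ne' (hH.continuous.div haC ha₀))
  have hboundary (p : ℝ × ℝ) : -2 * (H p.2 / a p.2 - H p.1 / a p.1) ≤ 4 * C := by
    have h₁ := abs_le.1 (hC _ ⟨p.1, rfl⟩)
    have h₂ := abs_le.1 (hC _ ⟨p.2, rfl⟩)
    simp only [Pi.div_apply] at h₁ h₂
    linarith [h₁.1, h₂.2]
  have hgper : Function.Periodic (fun t => H t ^ 2 / a t) P := fun t => by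
    simp only [hHper t, haper t]
  have hgpos := hgper.intervalIntegral_pos_of_nonneg hP ((hH.continuous.pow 2).div haC ha₀)
    (fun t => div_nonneg (sq_nonneg _) (hpos t).le) (div_pos (sq_pos_of_ne_zero ht₀) (hpos t₀))
  have hbulk : Tendsto (fun p : ℝ × ℝ => -2 * ∫ t in p.1..p.2, H t ^ 2 / a t)
      (atBot ×ˢ atTop) atBot :=
    (hgper.tendsto_intervalIntegral_atBot_prod_atTop hP hgpos).const_mul_atTop_of_neg
      (by norm_num)
  refine (tendsto_atBot_add_left_of_ge _ (4 * C) hboundary hbulk).congr fun p => ?_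
  rw [integral_neg_two_mul_deriv_div_eq hH ha ha₀]
  ring

end FlatFRW

/-- Periodic flat FRW models (Corollary 4.5, flat case): a positive, nonconstant, `C²`,
periodic scale factor gives radially null complete flat FRW spacetime whose
finite-interval ANEC integrals tend to `−∞`. -/
theorem periodic_flat_FRW_ANEC_diverges
    (a H : ℝ → ℝ) (P : ℝ) (hP : 0 < P) (ha : ContDiff ℝ 2 a)
    (hpos : ∀ t, 0 < a t) (hper : Function.Periodic a P)
    (hnc : ∃ s t, a s ≠ a t)
    (hH : ∀ t, H t = deriv a t / a t) :
    Tendsto (fun p : ℝ × ℝ => ∫ t in p.1..p.2, (-2 * deriv H t) / a t)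
      (atBot ×ˢ atTop) atBot ∧
    Tendsto (fun T => ∫ t in (0:ℝ)..T, a t) atTop atTop ∧
    Tendsto (fun T => ∫ t in (-T)..(0:ℝ), a t) atTop atTop := by
  have ha₀ t : a t ≠ 0 := (hpos t).ne'
  have ha₁ : ContDiff ℝ 1 a := ha.of_le one_le_two
  have hHdef : H = fun t => deriv a t / a t := funext hH
  have hHC : ContDiff ℝ 1 H := hHdef ▸ ha.deriv'.div ha₁ ha₀
  have hderiv t : HasDerivAt a (H t * a t) t := by
    rw [hH, div_mul_cancel₀ _ (ha₀ t)]
    exact (ha₁.differentiable one_ne_zero t).hasDerivAt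
  obtain ⟨t₀, ht₀⟩ : ∃ t₀, H t₀ ≠ 0 := by
    obtain ⟨s, t, hst⟩ := hnc
    by_contra! h
    refine hst (is_const_of_deriv_eq_zero (ha₁.differentiable one_ne_zero) (fun t => ?_) s t)
    simpa [hH, ha₀ t] using h t
  have hint : 0 < ∫ t in 0..P, a t :=
    intervalIntegral.intervalIntegral_pos_of_pos (ha.continuous.intervalIntegrable _ _) hpos hP
  exact ⟨tendsto_integral_neg_two_mul_deriv_div_atBot hP hHC hderiv hpos hper
      (hHdef ▸ hper.deriv.div hper) ht₀,
    hper.tendsto_atTop_intervalIntegral_of_pos hint hP,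
    hper.tendsto_intervalIntegral_neg_zero_atTop hP hint⟩
end

section
/- Let a : ℝ → ℝ be twice continuously differentiable with a(t) ≥ a_min > 0 for all t, let H(t) = a'(t)/a(t) satisfy |H(t)| ≤ H_max for all t, and define the closed-FRW finite-interval ANEC integral I(T₋,T₊) = ∫_{T₋}^{T₊} (−2·(H'(t) − 1/a(t)²))/a(t) dt. Suppose ∫_{T₋}^{T₊} a(t)^{−3} dt → +∞ as T₋ → −∞, T₊ → +∞, while ∫_ℝ H(t)²/a(t) dt < ∞. Then I(T₋,T₊) → +∞ as T₋ → −∞ and T₊ → +∞. -/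
/-!
Since `a' = H a`, the function `H / a` has derivative `H' / a - H² / a`, so integrating by parts
turns the closed-branch ANEC integral into
`2 ∫ a⁻³ - 2 ∫ H² / a - 2 [H / a]`.
The boundary term is bounded by `H_max / a_min` and the middle term by `∫_ℝ H² / a`,
so the divergence of `∫ a⁻³` forces the whole expression to `+∞`.
-/

open Filter MeasureTheory

theorem contDiff_logDeriv {n : WithTop ℕ∞} {a : ℝ → ℝ} (ha : ContDiff ℝ (n + 1) a)
    (ha0 : ∀ t, a t ≠ 0) : ContDiff ℝ n (logDeriv a) :=
  ha.deriv'.div (ha.of_le le_self_add) ha0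

theorem hasDerivAt_div_of_hasDerivAt_mul {H a : ℝ → ℝ} {h' t : ℝ} (hH : HasDerivAt H h' t)
    (ha : HasDerivAt a (H t * a t) t) (ha0 : a t ≠ 0) :
    HasDerivAt (fun s => H s / a s) (h' / a t - H t ^ 2 / a t) t :=
  (hH.div ha ha0).congr_deriv (by field_simp)

theorem intervalIntegral_le_integral_of_nonneg {μ : Measure ℝ} {f : ℝ → ℝ} (hf : Integrable f μ)
    (hf0 : 0 ≤ᵐ[μ] f) {T₁ T₂ : ℝ} (hT : T₁ ≤ T₂) :
    ∫ t in T₁..T₂, f t ∂μ ≤ ∫ t, f t ∂μ := by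
  rw [intervalIntegral.integral_of_le hT]
  exact setIntegral_le_integral hf hf0

theorem integral_closedANEC_eq {a H : ℝ → ℝ} (hH : ContDiff ℝ 1 H) (ha0 : ∀ t, a t ≠ 0)
    (ha : ∀ t, HasDerivAt a (H t * a t) t) (T₁ T₂ : ℝ) :
    ∫ t in T₁..T₂, (-2 * (deriv H t - 1 / (a t) ^ 2)) / a t =
      2 * (∫ t in T₁..T₂, 1 / (a t) ^ 3) - 2 * (∫ t in T₁..T₂, (H t) ^ 2 / a t)
        - 2 * (H T₂ / a T₂ - H T₁ / a T₁) := by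
  have ha_cont : Continuous a := continuous_iff_continuousAt.2 fun t => (ha t).continuousAt
  have hH_cont : Continuous H := hH.continuous
  have hH'_cont : Continuous (deriv H) := hH.continuous_deriv le_rfl
  have hcube : IntervalIntegrable (fun t => 1 / (a t) ^ 3) volume T₁ T₂ :=
    (continuous_const.div (ha_cont.pow 3) fun t => pow_ne_zero _ (ha0 t)).intervalIntegrable _ _
  have hsq : IntervalIntegrable (fun t => (H t) ^ 2 / a t) volume T₁ T₂ :=
    ((hH_cont.pow 2).div ha_cont ha0).intervalIntegrable _ _
  have hderiv : IntervalIntegrable (fun t => deriv H t / a t - (H t) ^ 2 / a t) volume T₁ T₂ :=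
    ((hH'_cont.div ha_cont ha0).sub ((hH_cont.pow 2).div ha_cont ha0)).intervalIntegrable _ _
  have hftc : ∫ t in T₁..T₂, (deriv H t / a t - (H t) ^ 2 / a t) = H T₂ / a T₂ - H T₁ / a T₁ :=
    intervalIntegral.integral_eq_sub_of_hasDerivAt
      (fun t _ => hasDerivAt_div_of_hasDerivAt_mul
        ((hH.differentiable one_ne_zero t).hasDerivAt) (ha t) (ha0 t)) hderiv
  have hsplit : (fun t => (-2 * (deriv H t - 1 / (a t) ^ 2)) / a t) = fun t =>
      2 * (1 / (a t) ^ 3) - 2 * ((H t) ^ 2 / a t) - 2 * (deriv H t / a t - (H t) ^ 2 / a t) := by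
    funext t
    field_simp [ha0 t]
    ring
  rw [hsplit, intervalIntegral.integral_sub ((hcube.const_mul _).sub (hsq.const_mul _))
      (hderiv.const_mul _), intervalIntegral.integral_sub (hcube.const_mul _) (hsq.const_mul _),
    intervalIntegral.integral_const_mul, intervalIntegral.integral_const_mul,
    intervalIntegral.integral_const_mul, hftc]

/-- Theorem 5.1(a): in closed (`k = +1`) FRW with bounded `H` and `a` bounded away from
zero, if `∫ a⁻³` diverges while `∫_ℝ H²/a < ∞`, then the closed-branch finite-interval
ANEC integrals tend to `+∞`. -/
theorem closed_FRW_ANEC_diverges_to_plus_infinity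
    (a H : ℝ → ℝ) (a_min H_max : ℝ) (ha : ContDiff ℝ 2 a)
    (hmin : 0 < a_min) (hamin : ∀ t, a_min ≤ a t)
    (hH : ∀ t, H t = deriv a t / a t) (hHb : ∀ t, |H t| ≤ H_max)
    (hdiv : Tendsto (fun p : ℝ × ℝ => ∫ t in p.1..p.2, 1 / (a t) ^ 3)
      (atBot ×ˢ atTop) atTop)
    (hint : Integrable (fun t => (H t) ^ 2 / a t)) :
    Tendsto (fun p : ℝ × ℝ =>
        ∫ t in p.1..p.2, (-2 * (deriv H t - 1 / (a t) ^ 2)) / a t)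
      (atBot ×ˢ atTop) atTop := by
  have hapos : ∀ t, 0 < a t := fun t => hmin.trans_le (hamin t)
  have ha0 : ∀ t, a t ≠ 0 := fun t => (hapos t).ne'
  have hH1 : ContDiff ℝ 1 H := funext hH ▸ contDiff_logDeriv ha ha0
  have ha' : ∀ t, HasDerivAt a (H t * a t) t := fun t => by
    rw [hH t, div_mul_cancel₀ _ (ha0 t)]
    exact (ha.differentiable two_ne_zero t).hasDerivAt
  have hHa : ∀ t, |H t / a t| ≤ H_max / a_min := fun t => by
    rw [abs_div, abs_of_pos (hapos t)]
    exact div_le_div₀ ((abs_nonneg _).trans (hHb t)) (hHb t) hmin (hamin t)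
  refine (tendsto_atTop_add_right_of_le' _ (-2 * (∫ t, (H t) ^ 2 / a t) - 4 * (H_max / a_min))
    (g := fun p : ℝ × ℝ => -2 * (∫ t in p.1..p.2, (H t) ^ 2 / a t)
      - 2 * (H p.2 / a p.2 - H p.1 / a p.1))
    (hdiv.const_mul_atTop two_pos) ?_).congr fun p => by
      rw [integral_closedANEC_eq hH1 ha0 ha' p.1 p.2]; ring
  filter_upwards [(eventually_le_atBot 0).prod_inl atTop, (eventually_ge_atTop 0).prod_inr atBot]
    with p hp₁ hp₂
  have hsq := intervalIntegral_le_integral_of_nonneg hint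
    (ae_of_all _ fun t => div_nonneg (sq_nonneg _) (hapos t).le) (hp₁.trans hp₂)
  linarith [(abs_le.mp (hHa p.1)).1, (abs_le.mp (hHa p.2)).2]
end
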